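/- arXiv:2410.04874 — 6 statements merged into one kernel-verified Lean document; each statement's English description precedes it below -/
import Mathlib

section
/- A simple graph G has a 2-edge-colouring in which, for every vertex v, the set of neighbours of v joined to v by edges of the same colour induces a complete subgraph (a locally complete 2-edge-colouring), if and only if the auxiliary graph G⁺ is bipartite. -/
open SimpleGraph

/-- A 2-edge-colouring `c` of `G` is locally complete if there is no monochromatic
induced path of length 2. -/
def IsLocallyComplete {V : Type*} (G : SimpleGraph V) (c : Sym2 V → Bool) : Prop :=
  ∀ u v w : V, G.Adj u v → G.Adj u w → v ≠ w → ¬ G.Adj v w → c s(u, v) ≠ c s(u, w)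

/-- `G` has a locally complete 2-edge-colouring. -/
def HasLC2EC {V : Type*} (G : SimpleGraph V) : Prop :=
  ∃ c : Sym2 V → Bool, IsLocallyComplete G c

/-- Two edges `e`, `f` of `G` form an induced path of length 2. -/
def AuxAdj {V : Type*} (G : SimpleGraph V) (e f : Sym2 V) : Prop :=
  ∃ u v w : V, G.Adj u v ∧ G.Adj u w ∧ v ≠ w ∧ ¬ G.Adj v w ∧ e = s(u, v) ∧ f = s(u, w)

/-- The auxiliary graph `G⁺`: vertices are the edges of `G`, adjacent iff they
form an induced path of length 2 in `G`. -/
def auxGraph {V : Type*} (G : SimpleGraph V) : SimpleGraph G.edgeSet :=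
  SimpleGraph.fromRel (fun e f => AuxAdj G (e : Sym2 V) (f : Sym2 V))

section

variable {V : Type*} {G : SimpleGraph V}

theorem auxGraph_adj_of_induced_path {u v w : V} (huv : G.Adj u v) (huw : G.Adj u w)
    (hvw : v ≠ w) (hnvw : ¬ G.Adj v w) :
    (auxGraph G).Adj ⟨s(u, v), huv⟩ ⟨s(u, w), huw⟩ := by
  refine (fromRel_adj _ _ _).2 ⟨fun h ↦ ?_, .inl ⟨u, v, w, huv, huw, hvw, hnvw, rfl, rfl⟩⟩
  rcases Sym2.eq_iff.1 (congrArg Subtype.val h) with ⟨-, hvw'⟩ | ⟨huw', -⟩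
  · exact hvw hvw'
  · exact G.irrefl (huw' ▸ huw)

theorem isLocallyComplete_iff_auxGraph_adj_ne {c : Sym2 V → Bool} :
    IsLocallyComplete G c ↔ ∀ ⦃e f : G.edgeSet⦄, (auxGraph G).Adj e f → c e ≠ c f := by
  constructor
  · rintro hc e f hef
    obtain ⟨-, ⟨u, v, w, huv, huw, hvw, hnvw, he, hf⟩ |
        ⟨u, v, w, huv, huw, hvw, hnvw, hf, he⟩⟩ := (fromRel_adj _ _ _).1 hef
    · rw [he, hf]
      exact hc u v w huv huw hvw hnvw
    · rw [he, hf]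
      exact (hc u v w huv huw hvw hnvw).symm
  · intro hc u v w huv huw hvw hnvw
    exact hc (auxGraph_adj_of_induced_path huv huw hvw hnvw)

end

theorem stmt_0 {V : Type*} (G : SimpleGraph V) :
    HasLC2EC G ↔ (auxGraph G).Colorable 2 := by
  constructor
  · rintro ⟨c, hc⟩
    have hproper := isLocallyComplete_iff_auxGraph_adj_ne.1 hc
    exact (Coloring.mk (c ∘ Subtype.val) fun hef ↦ hproper hef).colorable
  · rintro ⟨C⟩
    let C' : (auxGraph G).Coloring Bool := (auxGraph G).recolorOfEquiv finTwoEquiv C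
    refine ⟨Function.extend Subtype.val C' fun _ ↦ false,
      isLocallyComplete_iff_auxGraph_adj_ne.2 fun e f hef ↦ ?_⟩
    rw [Subtype.val_injective.extend_apply, Subtype.val_injective.extend_apply]
    exact C'.valid hef
end

section
/- For every integer q ≥ 2, the complement of the cycle C_{2q+1} has no locally complete 2-edge-colouring. -/
open SimpleGraph

open Fin.NatCast

section Aux

variable {q : ℕ}

/-- The colour of the edge from `u` to `u + k`. -/
def gcol (c : Sym2 (Fin (2*q+1)) → Bool) (u : Fin (2*q+1)) (k : ℕ) : Bool :=
  c s(u, u + (k : Fin (2*q+1)))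

lemma aux_neg_cast {k : ℕ} (h2 : 2 ≤ k) (hk : k ≤ 2*q-1) :
    -((k : Fin (2*q+1))) = ((2*q+1-k : ℕ) : Fin (2*q+1)) := by
  have h : (k : Fin (2*q+1)) + ((2*q+1-k : ℕ) : Fin (2*q+1)) = 0 := by
    rw [← Nat.cast_add]
    have he : k + (2*q+1-k) = 2*q+1 := by omega
    rw [he]
    exact Fin.natCast_self _
  exact neg_eq_of_add_eq_zero_right h

lemma aux_one_val (hq : 1 ≤ q) : ((1 : Fin (2*q+1))).val = 1 := by
  have h : ((1:ℕ) : Fin (2*q+1)).val = 1 := Fin.val_cast_of_lt (by omega)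
  simpa using h

lemma aux_adj (u : Fin (2*q+1)) {k : ℕ} (h2 : 2 ≤ k) (hk : k ≤ 2*q-1) :
    ((cycleGraph (2*q+1))ᶜ).Adj u (u + (k : Fin (2*q+1))) := by
  have hkn : k < 2*q+1 := by omega
  have hv : ((k : Fin (2*q+1))).val = k := Fin.val_cast_of_lt hkn
  have hneg : (-(k : Fin (2*q+1))).val = 2*q+1-k := by
    rw [aux_neg_cast h2 hk, Fin.val_cast_of_lt (by omega)]
  rw [compl_adj, cycleGraph_adj']
  refine ⟨?_, ?_⟩
  · intro h
    have h0 : (k : Fin (2*q+1)) = 0 := by rwa [left_eq_add] at h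
    rw [h0] at hv
    simp at hv; omega
  · have e1 : u - (u + (k : Fin (2*q+1))) = -(k : Fin (2*q+1)) := by abel
    have e2 : (u + (k : Fin (2*q+1))) - u = (k : Fin (2*q+1)) := by abel
    rw [e1, e2, hv, hneg]
    omega

lemma aux_step (hq : 1 ≤ q) {c : Sym2 (Fin (2*q+1)) → Bool}
    (hc : IsLocallyComplete (cycleGraph (2*q+1))ᶜ c)
    (u : Fin (2*q+1)) {k : ℕ} (h2 : 2 ≤ k) (hk : k + 1 ≤ 2*q-1) :
    gcol c u k ≠ gcol c u (k+1) := by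
  have hone := aux_one_val hq
  have a1 := aux_adj u h2 (by omega)
  have a2 := aux_adj u (show 2 ≤ k+1 by omega) hk
  have hcast : ((k+1 : ℕ) : Fin (2*q+1)) = (k : Fin (2*q+1)) + 1 := by push_cast; ring
  have hne : u + (k : Fin (2*q+1)) ≠ u + ((k+1 : ℕ) : Fin (2*q+1)) := by
    rw [hcast, ← add_assoc]
    intro h
    have h1 : (1 : Fin (2*q+1)) = 0 := by
      have h' := h.symm
      rwa [add_eq_left] at h'
    rw [h1] at hone
    simp at hone
  have hadj : ¬ ((cycleGraph (2*q+1))ᶜ).Adj (u + (k : Fin (2*q+1))) (u + ((k+1:ℕ) : Fin (2*q+1))) := by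
    rw [compl_adj]
    push_neg
    intro _
    rw [cycleGraph_adj']
    right
    have e : (u + ((k+1:ℕ) : Fin (2*q+1))) - (u + (k : Fin (2*q+1))) = 1 := by
      rw [hcast]; abel
    rw [e, hone]
  exact hc u _ _ a1 a2 hne hadj

lemma aux_parity (hq : 1 ≤ q) {c : Sym2 (Fin (2*q+1)) → Bool}
    (hc : IsLocallyComplete (cycleGraph (2*q+1))ᶜ c)
    (u : Fin (2*q+1)) {k : ℕ} (h2 : 2 ≤ k) (hk : k ≤ 2*q-1) :
    gcol c u k = (decide (k % 2 = 1)).xor (gcol c u 2) := by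
  induction k, h2 using Nat.le_induction with
  | base => simp
  | succ k hk2 ih =>
    have hs := aux_step hq hc u hk2 hk
    rw [ih (by omega)] at hs
    have hbool : ∀ a b x : Bool, (a.xor b) ≠ x → x = (!a).xor b := by decide
    have h' := hbool _ _ _ hs
    rw [h']
    congr 1
    rcases Nat.mod_two_eq_zero_or_one k with h | h
    · have h1 : (k+1) % 2 = 1 := by omega
      simp [h, h1]
    · have h1 : (k+1) % 2 = 0 := by omega
      simp [h, h1]

lemma aux_symm {c : Sym2 (Fin (2*q+1)) → Bool}
    (u : Fin (2*q+1)) {k : ℕ} (h2 : 2 ≤ k) (hk : k ≤ 2*q-1) :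
    gcol c u k = gcol c (u + (k : Fin (2*q+1))) (2*q+1-k) := by
  have he : u + (k : Fin (2*q+1)) + ((2*q+1-k : ℕ) : Fin (2*q+1)) = u := by
    rw [add_assoc, ← Nat.cast_add]
    have h : k + (2*q+1-k) = 2*q+1 := by omega
    rw [h, Fin.natCast_self, add_zero]
  show c s(u, u + (k : Fin (2*q+1)))
      = c s(u + (k : Fin (2*q+1)), u + (k : Fin (2*q+1)) + ((2*q+1-k : ℕ) : Fin (2*q+1)))
  rw [he, Sym2.eq_swap]

lemma aux_key (hq : 1 ≤ q) {c : Sym2 (Fin (2*q+1)) → Bool}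
    (hc : IsLocallyComplete (cycleGraph (2*q+1))ᶜ c)
    (u : Fin (2*q+1)) {k : ℕ} (h2 : 2 ≤ k) (hk : k ≤ 2*q-1) :
    gcol c (u + (k : Fin (2*q+1))) 2 = !(gcol c u 2) := by
  have h1 := aux_parity hq hc u h2 hk
  have h4 := aux_parity hq hc (u + (k : Fin (2*q+1))) (show 2 ≤ 2*q+1-k by omega)
      (show 2*q+1-k ≤ 2*q-1 by omega)
  have h5 := (aux_symm u h2 hk).symm.trans h1
  rw [h4] at h5
  have hb : (decide ((2*q+1-k) % 2 = 1)) = !(decide (k % 2 = 1)) := by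
    rcases Nat.mod_two_eq_zero_or_one k with h | h
    · have h1' : (2*q+1-k) % 2 = 1 := by omega
      simp [h, h1']
    · have h1' : (2*q+1-k) % 2 = 0 := by omega
      simp [h, h1']
  rw [hb] at h5
  have : ∀ a x y : Bool, ((!a).xor x) = (a.xor y) → x = !y := by decide
  exact this _ _ _ h5

end Aux

/-- For q ≥ 2, the complement of `C_{2q+1}` has no locally complete 2-edge-colouring. -/
theorem stmt_3 (q : ℕ) (hq : 2 ≤ q) : ¬ HasLC2EC (SimpleGraph.cycleGraph (2 * q + 1))ᶜ := by
  rintro ⟨c, hc⟩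
  have hq1 : 1 ≤ q := by omega
  have keyF : ∀ m k : ℕ, 2 ≤ k → k ≤ 2*q-1 →
      gcol c ((m + k : ℕ) : Fin (2*q+1)) 2 = !(gcol c ((m : ℕ) : Fin (2*q+1)) 2) := by
    intro m k h2 hk
    have h := aux_key hq1 hc ((m : ℕ) : Fin (2*q+1)) h2 hk
    rwa [← Nat.cast_add] at h
  have h3le : 3 ≤ 2*q-1 := by omega
  have e02 := keyF 0 2 (by omega) (by omega)
  have e24 := keyF 2 2 (by omega) (by omega)
  have e03 := keyF 0 3 (by omega) h3le
  have e13 := keyF 1 2 (by omega) (by omega)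
  have e14 := keyF 1 3 (by omega) h3le
  norm_num at e02 e24 e03 e13 e14
  have final : ∀ a b c' d e : Bool, c' = !a → e = !c' → d = !a → d = !b → e = !b → False := by
    decide
  exact final _ _ _ _ _ e02 e24 e03 e13 e14
end

section
/- If a graph G contains a kaleidoscope of order 2, then G contains the disjoint union K_1 + K_3, or an induced odd cycle of length at least 5, as an induced subgraph. -/
open SimpleGraph

/-- A walk `W` in `G` avoids a vertex `v` if `W` contains neither `v` nor
any neighbour of `v`. -/
def WalkAvoids {V : Type*} (G : SimpleGraph V) {a b : V} (W : G.Walk a b) (v : V) : Prop :=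
  ∀ x ∈ W.support, x ≠ v ∧ ¬ G.Adj v x

/-- A kaleidoscope of order `k ≥ 2` in `G`: vertices `v 0, …, v (k-1)` together with
walks `W i` from `v i` to `v (i+2)` (indices mod `k`) avoiding `v (i+1)`, the total
length of the walks being odd. -/
def HasKaleidoscopeOfOrder {V : Type*} (G : SimpleGraph V) (k : ℕ) : Prop :=
  2 ≤ k ∧ ∃ (v : ℕ → V) (W : (i : Fin k) → G.Walk (v i.val) (v ((i.val + 2) % k))),
    (∀ i : Fin k, WalkAvoids G (W i) (v ((i.val + 1) % k))) ∧
    Odd (∑ i : Fin k, (W i).length)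

/-- `G` contains a kaleidoscope (of some order). -/
def HasKaleidoscope {V : Type*} (G : SimpleGraph V) : Prop :=
  ∃ k : ℕ, HasKaleidoscopeOfOrder G k

/-- The disjoint union `K_1 + K_3`: vertex `0` is isolated, vertices `1,2,3` form
a triangle. -/
def K1K3 : SimpleGraph (Fin 4) :=
  SimpleGraph.fromRel (fun i j => i ≠ 0 ∧ j ≠ 0)

namespace SimpleGraph.Walk

variable {V : Type*} {G : SimpleGraph V}

/-- Take the first `n` edges of a walk. -/
def takeN : ∀ {u v : V} (p : G.Walk u v) (n : ℕ), G.Walk u (p.getVert n)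
  | _, _, p, 0 => Walk.nil.copy rfl (p.getVert_zero).symm
  | _, _, nil, _ + 1 => nil
  | _, _, cons h q, n + 1 => cons h (takeN q n)

/-- Drop the first `n` edges of a walk. -/
def dropN : ∀ {u v : V} (p : G.Walk u v) (n : ℕ), G.Walk (p.getVert n) v
  | _, _, p, 0 => p.copy (p.getVert_zero).symm rfl
  | _, _, nil, _ + 1 => nil
  | _, _, cons _ q, n + 1 => dropN q n

lemma length_takeN : ∀ {u v : V} (p : G.Walk u v) (n : ℕ), n ≤ p.length →
    (p.takeN n).length = n
  | _, _, p, 0, _ => by simp [takeN]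
  | _, _, nil, n + 1, h => by simp at h
  | _, _, cons a q, n + 1, h => by
    simp only [takeN, length_cons]
    exact congrArg Nat.succ (length_takeN q n (by simpa using h))

lemma length_dropN : ∀ {u v : V} (p : G.Walk u v) (n : ℕ),
    (p.dropN n).length = p.length - n
  | _, _, p, 0 => by simp [dropN]
  | _, _, nil, n + 1 => by simp [dropN]
  | _, _, cons a q, n + 1 => by
    simp only [dropN, length_cons]
    exact (length_dropN q n).trans (by omega)

lemma getVert_dropN : ∀ {u v : V} (p : G.Walk u v) (n i : ℕ),
    (p.dropN n).getVert i = p.getVert (n + i)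
  | _, _, p, 0, i => by simp [dropN]
  | _, _, nil, n + 1, i => by simp [dropN]
  | _, _, cons a q, n + 1, i => by
    show (dropN q n).getVert i = (cons a q).getVert (n + 1 + i)
    rw [getVert_dropN q n i]
    have : n + 1 + i = (n + i) + 1 := by omega
    rw [this, getVert_cons_succ]

lemma support_takeN_subset : ∀ {u v : V} (p : G.Walk u v) (n : ℕ),
    ∀ x ∈ (p.takeN n).support, x ∈ p.support
  | _, _, p, 0, x, hx => by
    simp only [takeN, support_copy, support_nil, List.mem_singleton] at hx
    simp [hx]
  | _, _, nil, n + 1, x, hx => hx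
  | _, _, cons a q, n + 1, x, hx => by
    simp only [takeN, support_cons, List.mem_cons] at hx ⊢
    rcases (List.mem_cons.mp hx : x = _ ∨ x ∈ (q.takeN n).support) with rfl | hx
    · exact Or.inl rfl
    · exact Or.inr (support_takeN_subset q n x hx)

lemma support_dropN_subset : ∀ {u v : V} (p : G.Walk u v) (n : ℕ),
    ∀ x ∈ (p.dropN n).support, x ∈ p.support
  | _, _, p, 0, x, hx => by simpa [dropN] using hx
  | _, _, nil, n + 1, x, hx => hx
  | _, _, cons a q, n + 1, x, hx => by
    simp only [dropN] at hx
    simp only [support_cons, List.mem_cons]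
    exact Or.inr (support_dropN_subset q n x hx)

end SimpleGraph.Walk

open SimpleGraph.Walk in
/-- Key lemma: an odd closed walk whose support lies in `S` yields an induced odd
cycle of length at least `3` all of whose vertices lie in `S`. -/
lemma exists_induced_odd_cycle {V : Type*} {G : SimpleGraph V} (S : Set V) {a : V}
    (w : G.Walk a a) (hodd : Odd w.length) (hS : ∀ x ∈ w.support, x ∈ S) :
    ∃ n : ℕ, 3 ≤ n ∧ Odd n ∧ ∃ f : SimpleGraph.cycleGraph n ↪g G, ∀ i, (f i : V) ∈ S := by
  classical
  set P : ℕ → Prop := fun m => Odd m ∧ ∃ (b : V) (q : G.Walk b b),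
    q.length = m ∧ ∀ x ∈ q.support, x ∈ S with hP
  have hPw : P w.length := ⟨hodd, a, w, rfl, hS⟩
  have hex : ∃ m, P m := ⟨w.length, hPw⟩
  obtain ⟨hq_odd, b, q, hq_len, hq_S⟩ := Nat.find_spec hex
  set N := q.length with hN
  have hq_odd' : Odd N := hq_len ▸ hq_odd
  have hmin' : ∀ m, m < N → ¬ P m := by
    intro m hm
    exact Nat.find_min hex (by omega)
  -- N ≥ 3
  have hN1 : N ≠ 1 := by
    intro h1
    have hadj := q.adj_getVert_succ (i := 0) (by omega)
    rw [q.getVert_zero] at hadj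
    have : q.getVert 1 = b := by
      have := q.getVert_length
      rwa [← hN, h1] at this
    rw [this] at hadj
    exact G.irrefl hadj
  have hN3 : 3 ≤ N := by
    obtain ⟨k, hk⟩ := hq_odd'
    omega
  -- the two spliced walks
  have e1 : ∀ i j : ℕ, i ≤ j → (q.dropN i).getVert (j - i) = q.getVert j := by
    intro i j hij
    rw [getVert_dropN, Nat.add_sub_cancel' hij]
  -- Claim A: vertices are distinct
  have claimA : ∀ i j : ℕ, i < j → j ≤ N → ¬(i = 0 ∧ j = N) →
      q.getVert i ≠ q.getVert j := by
    intro i j hij hjn hne heq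
    set w1 : G.Walk (q.getVert i) (q.getVert i) :=
      ((q.dropN i).takeN (j - i)).copy rfl ((e1 i j hij.le).trans heq.symm) with hw1
    have hw1len : w1.length = j - i := by
      rw [hw1, Walk.length_copy, length_takeN _ _ (by rw [length_dropN]; omega)]
    have hw1S : ∀ x ∈ w1.support, x ∈ S := by
      intro x hx
      rw [hw1, Walk.support_copy] at hx
      exact hq_S x (support_dropN_subset q i _ (support_takeN_subset _ _ _ hx))
    set w2 : G.Walk (q.getVert j) (q.getVert j) :=
      ((q.dropN j).append (q.takeN i)).copy rfl heq with hw2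
    have hw2len : w2.length = (N - j) + i := by
      rw [hw2, Walk.length_copy, Walk.length_append, length_dropN,
        length_takeN _ _ (by omega)]
    have hw2S : ∀ x ∈ w2.support, x ∈ S := by
      intro x hx
      rw [hw2, Walk.support_copy, Walk.mem_support_append_iff] at hx
      rcases hx with hx | hx
      · exact hq_S x (support_dropN_subset q j x hx)
      · exact hq_S x (support_takeN_subset q i x hx)
    have hpar : Odd (j - i) ∨ Odd ((N - j) + i) := by
      obtain ⟨k, hk⟩ := hq_odd'
      rcases Nat.even_or_odd (j - i) with ⟨t, ht⟩ | ho
      · right; exact ⟨k - t, by omega⟩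
      · left; exact ho
    have hjiN : j - i < N := by
      rcases Nat.eq_zero_or_pos i with rfl | hpos
      · have : j ≠ N := fun hj => hne ⟨rfl, hj⟩
        omega
      · omega
    rcases hpar with ho | ho
    · exact hmin' (j - i) hjiN ⟨ho, _, w1, hw1len, hw1S⟩
    · exact hmin' ((N - j) + i) (by omega) ⟨ho, _, w2, hw2len, hw2S⟩
  -- Claim B: no chords
  have claimB : ∀ i j : ℕ, i < j → j ≤ N → 2 ≤ j - i → j - i ≤ N - 2 →
      ¬ G.Adj (q.getVert i) (q.getVert j) := by
    intro i j hij hjn h2 hn2 hadj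
    set w1 : G.Walk (q.getVert i) (q.getVert i) :=
      (((q.dropN i).takeN (j - i)).copy rfl (e1 i j hij.le)).concat hadj.symm with hw1
    have hw1len : w1.length = (j - i) + 1 := by
      rw [hw1, Walk.length_concat, Walk.length_copy,
        length_takeN _ _ (by rw [length_dropN]; omega)]
    have hw1S : ∀ x ∈ w1.support, x ∈ S := by
      intro x hx
      rw [hw1, Walk.support_concat, Walk.support_copy] at hx
      simp only [List.concat_eq_append, List.mem_append, List.mem_singleton] at hx
      rcases hx with hx | rfl
      · exact hq_S x (support_dropN_subset q i _ (support_takeN_subset _ _ _ hx))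
      · exact hq_S _ (Walk.mem_support_iff_exists_getVert.mpr ⟨i, rfl, by omega⟩)
    set w2 : G.Walk (q.getVert j) (q.getVert j) :=
      ((q.dropN j).append (q.takeN i)).concat hadj with hw2
    have hw2len : w2.length = (N - j) + i + 1 := by
      rw [hw2, Walk.length_concat, Walk.length_append, length_dropN,
        length_takeN _ _ (by omega)]
    have hw2S : ∀ x ∈ w2.support, x ∈ S := by
      intro x hx
      rw [hw2, Walk.support_concat] at hx
      simp only [List.concat_eq_append, List.mem_append, List.mem_singleton] at hx
      rcases hx with hx | rfl
      · rw [Walk.mem_support_append_iff] at hx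
        rcases hx with hx | hx
        · exact hq_S x (support_dropN_subset q j x hx)
        · exact hq_S x (support_takeN_subset q i x hx)
      · exact hq_S _ (Walk.mem_support_iff_exists_getVert.mpr ⟨j, rfl, by omega⟩)
    have hpar : Odd ((j - i) + 1) ∨ Odd ((N - j) + i + 1) := by
      obtain ⟨k, hk⟩ := hq_odd'
      rcases Nat.even_or_odd ((j - i) + 1) with ⟨t, ht⟩ | ho
      · right; exact ⟨k + 1 - t, by omega⟩
      · left; exact ho
    rcases hpar with ho | ho
    · exact hmin' ((j - i) + 1) (by omega) ⟨ho, _, w1, hw1len, hw1S⟩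
    · exact hmin' ((N - j) + i + 1) (by omega) ⟨ho, _, w2, hw2len, hw2S⟩
  -- build the embedding
  have hinj : Function.Injective (fun i : Fin N => q.getVert i.val) := by
    intro i j hij
    by_contra hne
    rcases Nat.lt_trichotomy i.val j.val with h | h | h
    · exact claimA i.val j.val h j.isLt.le (fun hc => absurd hc.2 (Nat.ne_of_lt j.isLt)) hij
    · exact hne (Fin.ext h)
    · exact claimA j.val i.val h i.isLt.le (fun hc => absurd hc.2 (Nat.ne_of_lt i.isLt)) hij.symm
  -- characterization of cycleGraph adjacency
  have hchar : ∀ i j : Fin N, (SimpleGraph.cycleGraph N).Adj i j ↔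
      (j.val = i.val + 1 ∨ i.val = j.val + 1 ∨ (i.val = 0 ∧ j.val = N - 1) ∨
        (j.val = 0 ∧ i.val = N - 1)) := by
    intro i j
    rw [SimpleGraph.cycleGraph_adj']
    have hi := i.isLt
    have hj := j.isLt
    have key : ∀ a c : ℕ, a < N → c < N →
        (((N - c) + a) % N = 1 ↔ ((N - c) + a = 1 ∨ (N - c) + a = N + 1)) := by
      intro a c ha hc
      constructor
      · intro hmod
        rcases Nat.lt_or_ge ((N - c) + a) N with hlt | hge
        · left; rwa [Nat.mod_eq_of_lt hlt] at hmod
        · right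
          have hlt2 : (N - c) + a - N < N := by omega
          rw [Nat.mod_eq_sub_mod hge, Nat.mod_eq_of_lt hlt2] at hmod
          omega
      · intro hval
        rcases hval with hval | hval
        · rw [hval]; exact Nat.mod_eq_of_lt (by omega)
        · rw [hval, Nat.add_mod_left]; exact Nat.mod_eq_of_lt (by omega)
    rw [Fin.sub_def, Fin.sub_def]
    simp only [key i.val j.val hi hj, key j.val i.val hj hi]
    omega
  have hiff : ∀ i j : Fin N, G.Adj (q.getVert i.val) (q.getVert j.val) ↔
      (SimpleGraph.cycleGraph N).Adj i j := by
    intro i j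
    constructor
    · intro hadj
      rw [hchar]
      by_contra hc
      push_neg at hc
      obtain ⟨hc1, hc2, hc3, hc4⟩ := hc
      have hi := i.isLt
      have hj := j.isLt
      rcases Nat.lt_trichotomy i.val j.val with h | h | h
      · refine claimB i.val j.val h hj.le ?_ ?_ hadj
        · omega
        · -- j - i ≠ N - 1 since otherwise i = 0 ∧ j = N - 1
          have : ¬(i.val = 0 ∧ j.val = N - 1) := fun ⟨h1, h2⟩ => hc3 h1 h2
          omega
      · exact G.irrefl (by rwa [show i.val = j.val from h] at hadj)
      · refine claimB j.val i.val h hi.le ?_ ?_ hadj.symm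
        · omega
        · have : ¬(j.val = 0 ∧ i.val = N - 1) := fun ⟨h1, h2⟩ => hc4 h1 h2
          omega
    · intro hadj
      rw [hchar] at hadj
      have hi := i.isLt
      have hj := j.isLt
      have hwrap : G.Adj (q.getVert 0) (q.getVert (N - 1)) := by
        have h1 := q.adj_getVert_succ (i := N - 1) (by omega)
        have h2 : q.getVert (N - 1 + 1) = b := by
          have := q.getVert_length
          rw [← hN] at this
          rw [show N - 1 + 1 = N by omega, this]
        rw [h2] at h1
        rw [q.getVert_zero]
        exact h1.symm
      rcases hadj with h | h | ⟨h1, h2⟩ | ⟨h1, h2⟩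
      · have := q.adj_getVert_succ (i := i.val) (by omega)
        rwa [← h] at this
      · have := q.adj_getVert_succ (i := j.val) (by omega)
        rw [← h] at this
        exact this.symm
      · rw [h1, h2]; exact hwrap
      · rw [h1, h2]; exact hwrap.symm
  refine ⟨N, hN3, hq_odd', ⟨⟨fun i => q.getVert i.val, hinj⟩, ?_⟩, ?_⟩
  · intro i j
    exact hiff i j
  · intro i
    exact hq_S _ (Walk.mem_support_iff_exists_getVert.mpr ⟨i.val, rfl, i.isLt.le⟩)

/-- Helper: an odd closed walk avoiding a vertex gives the conclusion. -/
lemma half_step {V : Type*} (G : SimpleGraph V) (u : V) {b c : V} (w : G.Walk b c)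
    (hbc : b = c) (hodd : Odd w.length) (hav : WalkAvoids G w u) :
    Nonempty (K1K3 ↪g G) ∨
      ∃ n : ℕ, 5 ≤ n ∧ Odd n ∧ Nonempty (SimpleGraph.cycleGraph n ↪g G) := by
  subst hbc
  set S : Set V := {x | x ≠ u ∧ ¬ G.Adj u x} with hSdef
  have hS : ∀ x ∈ w.support, x ∈ S := fun x hx => hav x hx
  obtain ⟨n, hn3, hnodd, f, hfS⟩ := exists_induced_odd_cycle S w hodd hS
  rcases Nat.lt_or_ge n 5 with h5 | h5
  · -- n = 3, build K1K3
    left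
    have hn : n = 3 := by obtain ⟨k, hk⟩ := hnodd; omega
    subst hn
    have htri : ∀ i j : Fin 3, i ≠ j → G.Adj (f i) (f j) := by
      intro i j hij
      have : (SimpleGraph.cycleGraph 3).Adj i j := by
        rw [SimpleGraph.cycleGraph_three_eq_top]
        exact hij
      exact f.map_rel_iff.mpr this
    have hne : ∀ i : Fin 3, (f i : V) ≠ u := fun i => (hfS i).1
    have hnadj : ∀ i : Fin 3, ¬ G.Adj u (f i) := fun i => (hfS i).2
    refine ⟨⟨⟨![u, f 0, f 1, f 2], ?_⟩, ?_⟩⟩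
    · intro i j hij
      fin_cases i <;> fin_cases j <;>
        simp_all [Matrix.cons_val_zero, Matrix.cons_val_one] <;>
        first
          | rfl
          | (exfalso; first
              | exact hne _ hij.symm
              | exact hne _ hij
              | exact (f.injective hij).elim (by decide))
    · intro i j
      constructor
      · intro hadj
        fin_cases i <;> fin_cases j <;>
          simp_all [K1K3, SimpleGraph.fromRel_adj] <;>
          first
            | exact absurd hadj (G.irrefl)
            | exact absurd hadj (hnadj _)
            | exact absurd hadj.symm (hnadj _)
            | decide
      · intro hadj
        fin_cases i <;> fin_cases j <;>
          simp_all [K1K3, SimpleGraph.fromRel_adj] <;>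
          first
            | exact htri _ _ (by decide)
            | exact f.map_rel_iff.mpr (htri _ _ (by decide))
  · right
    exact ⟨n, h5, hnodd, ⟨f⟩⟩

/-- If `G` contains a kaleidoscope of order 2, then `G` contains `K_1 + K_3` or an
odd cycle of length at least 5 as an induced subgraph. -/
theorem stmt_7 {V : Type*} (G : SimpleGraph V) (h : HasKaleidoscopeOfOrder G 2) :
    Nonempty (K1K3 ↪g G) ∨
      ∃ n : ℕ, 5 ≤ n ∧ Odd n ∧ Nonempty (SimpleGraph.cycleGraph n ↪g G) := by
  obtain ⟨-, v, W, havoid, hodd⟩ := h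
  rw [Fin.sum_univ_two] at hodd
  rcases Nat.even_or_odd (W 0).length with he | ho
  · have ho1 : Odd (W 1).length := by
      obtain ⟨k, hk⟩ := hodd
      obtain ⟨t, ht⟩ := he
      exact ⟨k - t, by omega⟩
    exact half_step G (v ((1 + 1) % 2)) (W 1) (by norm_num) ho1 (havoid 1)
  · exact half_step G (v ((0 + 1) % 2)) (W 0) (by norm_num) ho (havoid 0)
end

section
/- A graph G has a locally complete 2-edge-colouring if and only if the complement of G contains no kaleidoscope. -/
open SimpleGraph

namespace Kal
variable {V : Type*}

lemma sym2_cancel {u b a : V} (h : s(u, b) = s(u, a)) (hb : b ≠ u) : b = a := by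
  rcases Sym2.eq_iff.mp h with ⟨-, h2⟩ | ⟨h1, h2⟩
  · exact h2
  · exact absurd h2 hb

lemma sym2_cross {u b u' a : V} (h : s(u, b) = s(u', a)) (huu : u ≠ u') :
    b = u' ∧ a = u := by
  rcases Sym2.eq_iff.mp h with ⟨h1, h2⟩ | ⟨h1, h2⟩
  · exact absurd h1 huu
  · exact ⟨h2, h1.symm⟩

lemma walkOfFun (H : SimpleGraph V) (c : ℕ → V) :
    ∀ n, (∀ i < n, H.Adj (c i) (c (i+1))) →
      ∃ W : H.Walk (c 0) (c n), W.length = n ∧ ∀ x ∈ W.support, ∃ i, i ≤ n ∧ x = c i := by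
  intro n
  induction n with
  | zero => exact fun _ => ⟨Walk.nil, rfl, by simp⟩
  | succ n ih =>
    intro h
    obtain ⟨W, hlen, hsup⟩ := ih (fun i hi => h i (by omega))
    refine ⟨W.concat (h n (by omega)), ?_, ?_⟩
    · simp [Walk.length_concat, hlen]
    · intro x hx
      rw [Walk.support_concat] at hx
      rw [List.mem_append] at hx
      rcases hx with hx | hx
      · obtain ⟨i, hi, rfl⟩ := hsup x hx
        exact ⟨i, by omega, rfl⟩
      · exact ⟨n+1, le_rfl, by simpa using hx⟩

variable {G : SimpleGraph V}

def IsSteps (G : SimpleGraph V) (m : ℕ) (u a b : ℕ → V) : Prop :=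
  ∀ i < m, G.Adj (u i) (a i) ∧ G.Adj (u i) (b i) ∧ Gᶜ.Adj (a i) (b i) ∧
    s(u i, b i) = s(u ((i + 1) % m), a ((i + 1) % m))

lemma not_compl_adj {x y : V} (h : G.Adj x y) : ¬ Gᶜ.Adj x y := by
  rw [compl_adj]
  push_neg
  exact fun _ => h

lemma steps_to_kal_run {m : ℕ} {u a b : ℕ → V} (hs : IsSteps G m u a b) (hodd : Odd m)
    (hlast : u (m - 1) ≠ u 0) : HasKaleidoscope Gᶜ := by
  classical
  have hm : 0 < m := hodd.pos
  -- run-end function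
  have hH : ∀ i : ℕ, ∃ j, i < j ∧ (m ≤ j ∨ u j ≠ u i) :=
    fun i => ⟨m + i + 1, by omega, Or.inl (by omega)⟩
  set re : ℕ → ℕ := fun i => Nat.find (hH i) with hredef
  have hre1 : ∀ i, i < re i := fun i => (Nat.find_spec (hH i)).1
  have hre2 : ∀ i, i < m → re i ≤ m := fun i hi => Nat.find_le ⟨by omega, Or.inl le_rfl⟩
  have hre3 : ∀ i j, i ≤ j → j < re i → u j = u i := by
    intro i j hij hj
    rcases eq_or_lt_of_le hij with rfl | hij
    · rfl
    · have := Nat.find_min (hH i) hj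
      push_neg at this
      exact (this hij).2
  have hre4 : ∀ i, i < m → re i < m → u (re i) ≠ u i := by
    intro i hi hrm
    have heq : re i = Nat.find (hH i) := rfl
    rcases (Nat.find_spec (hH i)).2 with h | h
    · omega
    · exact h
  -- boundary sequence
  set β : ℕ → ℕ := fun s => Nat.rec 0 (fun _ prev => if prev < m then re prev else prev) s
    with hβdef
  have hβ0 : β 0 = 0 := rfl
  have hβsucc : ∀ s, β (s + 1) = if β s < m then re (β s) else β s := fun s => rfl
  have hβle : ∀ s, β s ≤ m := by
    intro s
    induction s with
    | zero => omega
    | succ n ih =>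
      rw [hβsucc]
      split
      · exact hre2 _ (by assumption)
      · exact ih
  have hβgrow : ∀ s, β s < m → β s < β (s + 1) := by
    intro s hs'
    rw [hβsucc, if_pos hs']
    exact hre1 _
  have hβmono : Monotone β := by
    apply monotone_nat_of_le_succ
    intro s
    rw [hβsucc]
    split
    · exact le_of_lt (hre1 _)
    · exact le_rfl
  have hβm : β m = m := by
    have key : ∀ s, min s m ≤ β s := by
      intro s
      induction s with
      | zero => simp
      | succ n ih =>
        by_cases hn : β n < m
        · have := hβgrow n hn
          omega
        · have h1 := hβle n
          have h2 : β n = m := by omega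
          rw [hβsucc, if_neg hn, h2]
          omega
    have := key m
    have := hβle m
    omega
  -- number of runs
  have hTex : ∃ s, β s = m := ⟨m, hβm⟩
  set t : ℕ := Nat.find hTex with htdef
  have ht : β t = m := Nat.find_spec hTex
  have hβlt : ∀ s, s < t → β s < m := by
    intro s hst
    have h1 := Nat.find_min hTex hst
    have := hβle s
    omega
  have hβsucc' : ∀ s, s < t → β (s + 1) = re (β s) := by
    intro s hst
    rw [hβsucc, if_pos (hβlt s hst)]
  have ht0 : 0 < t := by
    rcases Nat.eq_zero_or_pos t with h | h
    · exfalso; rw [h] at ht; omega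
    · exact h
  -- within-run constancy
  have key1 : ∀ ρ, ρ < t → ∀ j, β ρ ≤ j → j < β (ρ + 1) → u j = u (β ρ) := by
    intro ρ hρ j h1 h2
    rw [hβsucc' ρ hρ] at h2
    exact hre3 _ _ h1 h2
  have ht2 : 2 ≤ t := by
    by_contra h
    push_neg at h
    have h1 : t = 1 := by omega
    apply hlast
    have hb1 : β 1 = m := by rw [← h1]; exact ht
    have hkey := key1 0 (by omega) (m - 1) (by omega)
      (by simp only [Nat.zero_add, hb1]; omega)
    rw [hβ0] at hkey
    exact hkey
  -- boundary structure
  have bigA0 : a 0 = u (m - 1) ∧ b (m - 1) = u 0 := by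
    obtain ⟨h1, h2, h3, h4⟩ := hs (m - 1) (by omega)
    have e1 : (m - 1 + 1) % m = 0 := by
      have : m - 1 + 1 = m := by omega
      rw [this, Nat.mod_self]
    rw [e1] at h4
    obtain ⟨hb', ha'⟩ := sym2_cross h4 hlast
    exact ⟨ha', hb'⟩
  have bigA : ∀ ρ, 1 ≤ ρ → ρ < t → a (β ρ) = u (β (ρ - 1)) ∧ b (β ρ - 1) = u (β ρ) := by
    intro ρ hρ1 hρt
    have hρm : ρ - 1 < t := by omega
    have hjre : β ρ = re (β (ρ - 1)) := by
      have := hβsucc' (ρ - 1) hρm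
      rw [show ρ - 1 + 1 = ρ by omega] at this
      exact this
    have hjm : β ρ < m := hβlt ρ hρt
    have hjpos : β (ρ - 1) < β ρ := by
      rw [hjre]; exact hre1 _
    have hune : u (β ρ) ≠ u (β (ρ - 1)) := by
      rw [hjre]
      exact hre4 _ (hβlt _ hρm) (by rw [← hjre]; exact hjm)
    have huprev : u (β ρ - 1) = u (β (ρ - 1)) := by
      apply hre3
      · omega
      · rw [← hjre]; omega
    obtain ⟨h1, h2, h3, h4⟩ := hs (β ρ - 1) (by omega)
    have e1 : (β ρ - 1 + 1) % m = β ρ := by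
      rw [show β ρ - 1 + 1 = β ρ by omega, Nat.mod_eq_of_lt hjm]
    rw [e1, huprev] at h4
    obtain ⟨hb', ha'⟩ := sym2_cross h4 (fun h => hune h.symm)
    exact ⟨ha', hb'⟩
  -- interior structure
  have hint : ∀ i, i + 1 < m → u (i + 1) = u i → b i = a (i + 1) := by
    intro i hi hu
    obtain ⟨h1, h2, h3, h4⟩ := hs i (by omega)
    rw [Nat.mod_eq_of_lt hi, hu] at h4
    exact sym2_cancel h4 h2.ne'
  -- vertices and run lengths
  set v : ℕ → V := fun j => u (β (j % t)) with hvdef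
  set ℓ : ℕ → ℕ := fun ρ => β (ρ + 1) - β ρ with hℓdef
  -- segments
  have hS : ∀ ρ, ρ < t → ∃ S : Gᶜ.Walk (v ((ρ + (t - 1)) % t)) (v ((ρ + 1) % t)),
      S.length = ℓ ρ ∧ WalkAvoids Gᶜ S (v ρ) := by
    intro ρ hρ
    have hβρm : β ρ < m := hβlt ρ hρ
    have hβρ1 : β (ρ + 1) ≤ m := hβle (ρ + 1)
    have hgrow : β ρ < β (ρ + 1) := hβgrow _ hβρm
    have hLdef : ℓ ρ = β (ρ + 1) - β ρ := rfl
    have hL : 0 < ℓ ρ := by omega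
    set c : ℕ → V := fun s => if s < ℓ ρ then a (β ρ + s) else u (β ((ρ + 1) % t))
      with hcdef
    have hrun : ∀ s, s < ℓ ρ → β ρ + s < β (ρ + 1) := by intro s hs'; omega
    have hadjfun : ∀ s, s < ℓ ρ → Gᶜ.Adj (c s) (c (s + 1)) := by
      intro s hsL
      have hi : β ρ + s < β (ρ + 1) := hrun s hsL
      have him : β ρ + s < m := by omega
      have hcs : c s = a (β ρ + s) := by simp [hcdef, hsL]
      obtain ⟨h1, h2, h3, h4⟩ := hs (β ρ + s) him
      rw [hcs]
      rcases eq_or_lt_of_le (Nat.succ_le_of_lt hsL) with hL1 | hL1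
      · -- s + 1 = ℓ ρ : last step of the run
        have hcs1 : c (s + 1) = u (β ((ρ + 1) % t)) := by simp [hcdef, ← hL1]
        have hbi : b (β ρ + s) = u (β ((ρ + 1) % t)) := by
          rcases eq_or_lt_of_le (show ρ + 1 ≤ t from hρ) with hteq | hlt2
          · have e : (ρ + 1) % t = 0 := by rw [hteq, Nat.mod_self]
            have hβt : β (ρ + 1) = m := by rw [hteq, ht]
            have e2 : β ρ + s = m - 1 := by omega
            rw [e, hβ0, e2]
            exact bigA0.2
          · have e : (ρ + 1) % t = ρ + 1 := Nat.mod_eq_of_lt hlt2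
            have e2 : β ρ + s = β (ρ + 1) - 1 := by omega
            rw [e, e2]
            exact (bigA (ρ + 1) (by omega) hlt2).2
        rw [hcs1, ← hbi]
        exact h3
      · -- s + 1 < ℓ ρ : interior step
        have hcs1 : c (s + 1) = a (β ρ + s + 1) := by
          have e : β ρ + (s + 1) = β ρ + s + 1 := by omega
          simp only [hcdef, if_pos hL1, e]
        have hu : u (β ρ + s + 1) = u (β ρ + s) := by
          rw [key1 ρ hρ (β ρ + s + 1) (by omega) (by omega),
            key1 ρ hρ (β ρ + s) (by omega) (by omega)]
        have hb' := hint (β ρ + s) (by omega) hu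
        rw [hcs1, ← hb']
        exact h3
    obtain ⟨W1, hW1len, hW1sup⟩ := walkOfFun Gᶜ c (ℓ ρ) (fun i hi => hadjfun i hi)
    have hc0 : c 0 = v ((ρ + (t - 1)) % t) := by
      have hc0' : c 0 = a (β ρ) := by simp [hcdef, hL]
      rw [hc0']
      rcases Nat.eq_zero_or_pos ρ with rfl | hρpos
      · have e : (0 + (t - 1)) % t = t - 1 := by
          rw [Nat.zero_add]; exact Nat.mod_eq_of_lt (by omega)
        have e2 : (t - 1) % t = t - 1 := Nat.mod_eq_of_lt (by omega)
        rw [e]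
        show a (β 0) = u (β ((t - 1) % t))
        rw [e2, hβ0, bigA0.1]
        exact key1 (t - 1) (by omega) (m - 1)
          (by have := hβlt (t - 1) (by omega); omega)
          (by rw [show t - 1 + 1 = t by omega, ht]; omega)
      · have e : (ρ + (t - 1)) % t = ρ - 1 := by
          rw [show ρ + (t - 1) = (ρ - 1) + t by omega, Nat.add_mod_right]
          exact Nat.mod_eq_of_lt (by omega)
        have e2 : (ρ - 1) % t = ρ - 1 := Nat.mod_eq_of_lt (by omega)
        rw [e]
        show a (β ρ) = u (β ((ρ - 1) % t))
        rw [e2]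
        exact (bigA ρ hρpos hρ).1
    have hcL : c (ℓ ρ) = v ((ρ + 1) % t) := by
      have hc' : c (ℓ ρ) = u (β ((ρ + 1) % t)) := by simp [hcdef]
      have e2 : (ρ + 1) % t % t = (ρ + 1) % t := Nat.mod_eq_of_lt (Nat.mod_lt _ (by omega))
      rw [hc']
      show _ = u (β ((ρ + 1) % t % t))
      rw [e2]
    have hvρ : v ρ = u (β ρ) := by
      show u (β (ρ % t)) = u (β ρ)
      rw [Nat.mod_eq_of_lt hρ]
    refine ⟨W1.copy hc0 hcL, by rw [Walk.length_copy, hW1len], ?_⟩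
    intro x hx
    rw [Walk.support_copy] at hx
    obtain ⟨s', hsle, rfl⟩ := hW1sup x hx
    rcases eq_or_lt_of_le hsle with rfl | hslt
    · -- endpoint : the next apex
      have hx' : c (ℓ ρ) = u (β ((ρ + 1) % t)) := by simp [hcdef]
      rcases eq_or_lt_of_le (show ρ + 1 ≤ t from hρ) with hteq | hlt2
      · have e : (ρ + 1) % t = 0 := by rw [hteq, Nat.mod_self]
        have hx2 : c (ℓ ρ) = u 0 := by rw [hx', e, hβ0]
        have hvv : u (β ρ) = u (m - 1) :=
          Eq.symm <| key1 ρ hρ (m - 1) (by omega) (by rw [show ρ + 1 = t from hteq, ht]; omega)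
        have hadj : G.Adj (u 0) (u (m - 1)) := by
          have := (hs 0 hm).1
          rw [bigA0.1] at this
          exact this
        rw [hx2, hvρ, hvv]
        exact ⟨fun h => hlast h.symm, not_compl_adj hadj.symm⟩
      · have e : (ρ + 1) % t = ρ + 1 := Nat.mod_eq_of_lt hlt2
        have hx2 : c (ℓ ρ) = u (β (ρ + 1)) := by rw [hx', e]
        have hβρ1m : β (ρ + 1) < m := hβlt _ hlt2
        have hne2 : u (β (ρ + 1)) ≠ u (β ρ) := by
          rw [hβsucc' ρ hρ]
          exact hre4 _ hβρm (by rw [← hβsucc' ρ hρ]; exact hβρ1m)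
        have hadj : G.Adj (u (β (ρ + 1))) (u (β ρ)) := by
          have h1 := (hs (β (ρ + 1)) hβρ1m).1
          have h2 := (bigA (ρ + 1) (by omega) hlt2).1
          rw [show ρ + 1 - 1 = ρ from rfl] at h2
          rw [h2] at h1
          exact h1
        rw [hx2, hvρ]
        exact ⟨hne2, not_compl_adj hadj.symm⟩
    · -- interior vertex of the run
      have hcs : c s' = a (β ρ + s') := by simp [hcdef, hslt]
      have hi : β ρ + s' < β (ρ + 1) := hrun s' hslt
      have him : β ρ + s' < m := by omega
      have hu : u (β ρ + s') = u (β ρ) := key1 ρ hρ _ (by omega) hi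
      have hadj : G.Adj (u (β ρ)) (a (β ρ + s')) := by
        rw [← hu]; exact (hs _ him).1
      rw [hcs, hvρ]
      exact ⟨hadj.ne', not_compl_adj hadj⟩
  choose S hSlen hSav using hS
  haveI : NeZero t := ⟨by omega⟩
  refine ⟨t, ht2, v, fun i =>
    (S ((i.val + 1) % t) (Nat.mod_lt _ (by omega))).copy
      (by
        have e : ((i.val + 1) % t + (t - 1)) % t = i.val := by
          rw [Nat.mod_add_mod, show i.val + 1 + (t - 1) = i.val + t by omega,
            Nat.add_mod_right]
          exact Nat.mod_eq_of_lt i.isLt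
        rw [e])
      (by
        have e : ((i.val + 1) % t + 1) % t = (i.val + 2) % t := by rw [Nat.mod_add_mod]
        rw [e]), ?_, ?_⟩
  · intro i x hx
    rw [Walk.support_copy] at hx
    exact hSav ((i.val + 1) % t) (Nat.mod_lt _ (by omega)) x hx
  · have hsum : (∑ i : Fin t, ℓ ((i.val + 1) % t)) = m := by
      have e3 : ∀ i : Fin t, (i + 1 : Fin t).val = (i.val + 1) % t := by
        intro i; rw [Fin.add_def]; simp
      calc (∑ i : Fin t, ℓ ((i.val + 1) % t))
          = ∑ i : Fin t, ℓ ((i + 1 : Fin t).val) :=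
            Finset.sum_congr rfl (fun i _ => by rw [e3])
        _ = ∑ i : Fin t, ℓ i.val :=
            Fintype.sum_equiv (Equiv.addRight 1) _ _ (fun i => rfl)
        _ = ∑ ρ ∈ Finset.range t, ℓ ρ := Fin.sum_univ_eq_sum_range _ _
        _ = β t - β 0 := Finset.sum_range_tsub hβmono t
        _ = m := by rw [ht, hβ0]; omega
    simp only [Walk.length_copy, hSlen]
    rw [hsum]
    exact hodd


def Conf (G : SimpleGraph V) : SimpleGraph (Sym2 V) where
  Adj e f := ∃ u x y, G.Adj u x ∧ G.Adj u y ∧ Gᶜ.Adj x y ∧ e = s(u, x) ∧ f = s(u, y)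
  symm := by
    refine ⟨?_⟩
    rintro e f ⟨u, x, y, h1, h2, h3, rfl, rfl⟩
    exact ⟨u, y, x, h2, h1, h3.symm, rfl, rfl⟩
  loopless := by
    refine ⟨?_⟩
    rintro e ⟨u, x, y, h1, h2, h3, rfl, heq⟩
    exact h3.ne (sym2_cancel heq.symm h2.ne').symm

variable {G : SimpleGraph V}


lemma steps_rotate {m : ℕ} {u a b : ℕ → V} (h : IsSteps G m u a b) (r : ℕ) :
    IsSteps G m (fun i => u ((i + r) % m)) (fun i => a ((i + r) % m))
      (fun i => b ((i + r) % m)) := by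
  intro i hi
  have hm : 0 < m := lt_of_le_of_lt (Nat.zero_le _) hi
  obtain ⟨h1, h2, h3, h4⟩ := h ((i + r) % m) (Nat.mod_lt _ hm)
  refine ⟨h1, h2, h3, ?_⟩
  have key : ((i + r) % m + 1) % m = ((i + 1) % m + r) % m := by
    rw [Nat.mod_add_mod, Nat.mod_add_mod]
    ring_nf
  simp only []
  rw [key] at h4
  exact h4

lemma steps_of_walk {e : Sym2 V} (p : (Conf G).Walk e e) (hm : 0 < p.length) :
    ∃ u a b : ℕ → V, IsSteps G p.length u a b := by
  classical
  set m := p.length with hmdef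
  have hL : p.darts.length = m := p.length_darts
  have hne : p.darts ≠ [] := by
    rw [← List.length_pos_iff, hL]; exact hm
  have hadj : ∀ i : Fin m, ∃ w x y, G.Adj w x ∧ G.Adj w y ∧ Gᶜ.Adj x y ∧
      (p.darts.get ⟨i.val, by rw [hL]; exact i.isLt⟩).fst = s(w, x) ∧
      (p.darts.get ⟨i.val, by rw [hL]; exact i.isLt⟩).snd = s(w, y) :=
    fun i => (p.darts.get _).adj
  choose w x y h1 h2 h3 h4 h5 using hadj
  haveI hV : Nonempty V := ⟨w ⟨0, hm⟩⟩
  refine ⟨(fun i => if h : i < m then w ⟨i, h⟩ else Classical.arbitrary V),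
    (fun i => if h : i < m then x ⟨i, h⟩ else Classical.arbitrary V),
    (fun i => if h : i < m then y ⟨i, h⟩ else Classical.arbitrary V), ?_⟩
  intro i hi
  simp only [dif_pos hi]
  refine ⟨h1 _, h2 _, h3 _, ?_⟩
  by_cases hi1 : i + 1 < m
  · have hmod : (i + 1) % m = i + 1 := Nat.mod_eq_of_lt hi1
    rw [hmod]
    simp only [dif_pos hi1]
    rw [← h5 ⟨i, hi⟩, ← h4 ⟨i + 1, hi1⟩]
    exact List.isChain_iff_getElem.mp p.isChain_dartAdj_darts i (by rw [hL]; omega)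
  · have hieq : i + 1 = m := by omega
    have hmod : (i + 1) % m = 0 := by rw [hieq, Nat.mod_self]
    rw [hmod]
    simp only [dif_pos hm]
    rw [← h5 ⟨i, hi⟩, ← h4 ⟨0, hm⟩]
    have hlast : p.darts.get ⟨i, by rw [hL]; exact hi⟩ = p.darts.getLast hne := by
      rw [List.getLast_eq_getElem, List.get_eq_getElem]
      congr 1
      show i = p.darts.length - 1
      omega
    have hhead : p.darts.get ⟨0, by rw [hL]; exact hm⟩ = p.darts.head hne := by
      rw [List.head_eq_getElem, List.get_eq_getElem]
    rw [hlast, hhead, p.getLast_darts_eq_lastDart hne, p.head_darts_eq_firstDart hne]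
    simp


lemma steps_to_kal_const {m : ℕ} {u a b : ℕ → V} (hs : IsSteps G m u a b) (hodd : Odd m)
    (hcst : ∀ i < m, u i = u 0) : HasKaleidoscope Gᶜ := by
  have hm : 0 < m := hodd.pos
  have hb : ∀ i < m, b i = a ((i + 1) % m) := by
    intro i hi
    obtain ⟨h1, h2, h3, h4⟩ := hs i hi
    rw [hcst ((i+1) % m) (Nat.mod_lt _ hm), ← hcst i hi] at h4
    exact sym2_cancel h4 h2.ne'
  set c : ℕ → V := fun s => a (s % m) with hcdef
  have hadjfun : ∀ i < m, Gᶜ.Adj (c i) (c (i + 1)) := by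
    intro i hi
    show Gᶜ.Adj (a (i % m)) (a ((i + 1) % m))
    rw [Nat.mod_eq_of_lt hi, ← hb i hi]
    exact (hs i hi).2.2.1
  obtain ⟨W0, hlen, hsup⟩ := walkOfFun Gᶜ c m hadjfun
  set v : ℕ → V := fun n => if n % 2 = 0 then a 0 else u 0 with hvdef
  have hv0 : v 0 = a 0 := by simp [hvdef]
  have hv1 : v 1 = u 0 := by simp [hvdef]
  refine ⟨2, le_rfl, v, fun i =>
    if h : i.val = 0 then
      W0.copy (by simp [hcdef, h, hv0]) (by simp [hcdef, h, Nat.mod_self, hvdef])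
    else
      (Walk.nil : Gᶜ.Walk (u 0) (u 0)).copy
        (by simp [show i.val = 1 by omega, hv1])
        (by simp [show i.val = 1 by omega, hvdef]), ?_, ?_⟩
  · intro i
    by_cases h : i.val = 0
    · simp only [dif_pos h]
      intro x hx
      rw [Walk.support_copy] at hx
      obtain ⟨j, hj, rfl⟩ := hsup x hx
      have hjm : j % m < m := Nat.mod_lt _ hm
      have hadj : G.Adj (u 0) (a (j % m)) := by
        rw [← hcst _ hjm]; exact (hs _ hjm).1
      have h1 : (i.val + 1) % 2 = 1 := by omega
      constructor
      · rw [h1, hv1]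
        exact hadj.ne'
      · rw [h1, hv1]
        exact fun hh => not_compl_adj hadj (by exact hh)
    · simp only [dif_neg h]
      have h1 : i.val = 1 := by omega
      have h2 : (i.val + 1) % 2 = 0 := by omega
      intro x hx
      rw [Walk.support_copy, Walk.support_nil, List.mem_singleton] at hx
      subst hx
      have hadj : G.Adj (u 0) (a 0) := (hs 0 hm).1
      rw [h2, hv0]
      exact ⟨hadj.ne, fun hh => not_compl_adj hadj hh.symm⟩
  · rw [Fin.sum_univ_two]
    beta_reduce
    rw [dif_pos (show (0 : Fin 2).val = 0 from rfl),
      dif_neg (show ¬ (1 : Fin 2).val = 0 by simp)]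
    simp only [Walk.length_copy, Walk.length_nil, hlen, add_zero]
    exact hodd


lemma steps_to_kal {m : ℕ} {u a b : ℕ → V} (hs : IsSteps G m u a b) (hodd : Odd m) :
    HasKaleidoscope Gᶜ := by
  have hm : 0 < m := hodd.pos
  by_cases hcst : ∀ i < m, u i = u 0
  · exact steps_to_kal_const hs hodd hcst
  · have hex : ∃ j, j < m ∧ u j ≠ u ((j + 1) % m) := by
      by_contra hno
      push_neg at hno
      apply hcst
      intro i
      induction i with
      | zero => intro _; rfl
      | succ n ih =>
        intro hi
        have hn : n < m := by omega
        have h1 := hno n hn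
        rw [Nat.mod_eq_of_lt hi] at h1
        rw [← h1]
        exact ih hn
    obtain ⟨j, hj, hju⟩ := hex
    have hrot := steps_rotate hs (j + 1)
    apply steps_to_kal_run hrot hodd
    show u ((m - 1 + (j + 1)) % m) ≠ u ((0 + (j + 1)) % m)
    have e1 : (m - 1 + (j + 1)) % m = j := by
      rw [show m - 1 + (j + 1) = j + m by omega, Nat.add_mod_right, Nat.mod_eq_of_lt hj]
    have e2 : (0 + (j + 1)) % m = (j + 1) % m := by rw [Nat.zero_add]
    rw [e1, e2]
    exact hju

lemma no_odd_closed (hK : ¬ HasKaleidoscope Gᶜ) {e : Sym2 V} (p : (Conf G).Walk e e) :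
    Even p.length := by
  by_contra h
  have hodd : Odd p.length := Nat.not_even_iff_odd.mp h
  obtain ⟨u', a', b', hsteps⟩ := steps_of_walk p hodd.pos
  exact hK (steps_to_kal hsteps hodd)

lemma adj_of_avoid {v x : V} (h1 : x ≠ v) (h2 : ¬ Gᶜ.Adj v x) : G.Adj v x := by
  rw [compl_adj] at h2
  push_neg at h2
  exact h2 (fun h => h1 h.symm)

lemma parity_lemma {c : Sym2 V → Bool} (hc : IsLocallyComplete G c) (v : V) :
    ∀ {x y : V} (W : Gᶜ.Walk x y), WalkAvoids Gᶜ W v →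
      (c s(v, x) = c s(v, y) ↔ Even W.length) := by
  intro x y W
  induction W with
  | nil => simp
  | @cons x z y h W ih =>
    intro hav
    have hx : x ∈ (Walk.cons h W).support := by simp
    have hz : z ∈ (Walk.cons h W).support := by simp [Walk.support_cons]
    have havW : WalkAvoids Gᶜ W v := fun t ht => hav t (by simp [Walk.support_cons, ht])
    have hvx : G.Adj v x := adj_of_avoid (hav x hx).1 (hav x hx).2
    have hvz : G.Adj v z := adj_of_avoid (hav z hz).1 (hav z hz).2
    have hne : c s(v, x) ≠ c s(v, z) :=
      hc v x z hvx hvz (Gᶜ.ne_of_adj h) ((compl_adj G x z).mp h).2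
    have hIH := ih havW
    rw [Walk.length_cons, Nat.even_add_one]
    constructor
    · intro hxy hW
      exact hne (hxy.trans (hIH.mpr hW).symm)
    · intro hW
      have : c s(v, z) = c s(v, y) ↔ False := by
        constructor
        · intro h'; exact hW (hIH.mp h')
        · exact False.elim
      have h2 : c s(v, z) ≠ c s(v, y) := fun h' => this.mp h'
      revert hne h2
      cases c s(v, x) <;> cases c s(v, z) <;> cases c s(v, y) <;> simp

theorem forward (hG : HasLC2EC G) : ¬ HasKaleidoscope Gᶜ := by
  rintro ⟨k, hk2, v, W, havoid, hodd⟩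
  obtain ⟨c, hc⟩ := hG
  haveI : NeZero k := ⟨by omega⟩
  set g : Fin k → ZMod 2 := fun i => if c s(v i.val, v ((i.val + 1) % k)) then 1 else 0 with hg
  have key : ∀ i : Fin k, g (i + 1) = g i + ((W i).length : ZMod 2) := by
    intro i
    have hlt : i.val < k := i.isLt
    have hpar := parity_lemma hc (v ((i.val + 1) % k)) (W i) (havoid i)
    have e1 : s(v ((i.val + 1) % k), v i.val) = s(v i.val, v ((i.val + 1) % k)) :=
      Sym2.eq_swap
    have e2 : ((i.val + 1) % k + 1) % k = (i.val + 2) % k := by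
      rw [Nat.mod_add_mod]
    have e3 : (i + 1 : Fin k).val = (i.val + 1) % k := by
      rw [Fin.add_def]; simp
    rw [e1] at hpar
    have hcast : ((W i).length : ZMod 2) = 0 ↔ Even (W i).length := by
      rw [ZMod.natCast_eq_zero_iff]
      exact even_iff_two_dvd.symm
    by_cases he : Even (W i).length
    · have : c s(v i.val, v ((i.val + 1) % k)) = c s(v ((i.val + 1) % k), v ((i.val + 2) % k)) :=
        hpar.mpr he
      rw [hcast.mpr he, add_zero, hg]
      simp only [e3, e2, this]
    · have hne : c s(v i.val, v ((i.val + 1) % k)) ≠ c s(v ((i.val + 1) % k), v ((i.val + 2) % k)) :=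
        fun h => he (hpar.mp h)
      have h1 : ((W i).length : ZMod 2) = 1 := by
        have h0 : ¬ ((W i).length : ZMod 2) = 0 := fun h => he (hcast.mp h)
        have h01 : ∀ x : ZMod 2, x = 0 ∨ x = 1 := by decide
        rcases h01 ((W i).length : ZMod 2) with h | h
        · exact absurd h h0
        · exact h
      rw [h1, hg]
      simp only [e3, e2]
      cases hb1 : c s(v i.val, v ((i.val + 1) % k)) <;>
        cases hb2 : c s(v ((i.val + 1) % k), v ((i.val + 2) % k)) <;>
          simp_all <;> decide
  have hsum : ∑ i : Fin k, g (i + 1) = ∑ i : Fin k, g i :=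
    Fintype.sum_equiv (Equiv.addRight 1) _ _ (fun i => rfl)
  have hkey : ∑ i : Fin k, g (i + 1) = ∑ i : Fin k, (g i + ((W i).length : ZMod 2)) :=
    Finset.sum_congr rfl (fun i _ => key i)
  rw [Finset.sum_add_distrib, hsum] at hkey
  have hzero : ∑ i : Fin k, ((W i).length : ZMod 2) = 0 := (left_eq_add.mp hkey).symm ▸ rfl
  rw [← Nat.cast_sum, ZMod.natCast_eq_zero_iff, ← even_iff_two_dvd] at hzero
  exact (Nat.not_even_iff_odd.mpr hodd) hzero


lemma backward {G : SimpleGraph V} (hK : ¬ HasKaleidoscope Gᶜ) : HasLC2EC G := by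
  classical
  have hreach : ∀ e : Sym2 V, (Conf G).Reachable (((Conf G).connectedComponentMk e).out) e := by
    intro e
    rw [← ConnectedComponent.eq]
    exact Quot.out_eq _
  let wk : ∀ e : Sym2 V, (Conf G).Walk (((Conf G).connectedComponentMk e).out) e :=
    fun e => Classical.choice (hreach e)
  refine ⟨fun e => decide (Odd (wk e).length), ?_⟩
  intro x y z hxy hxz hne hnadj
  have hadj : (Conf G).Adj s(x, y) s(x, z) :=
    ⟨x, y, z, hxy, hxz, (compl_adj G y z).mpr ⟨hne, hnadj⟩, rfl, rfl⟩
  have hcomp : (Conf G).connectedComponentMk s(x, y) = (Conf G).connectedComponentMk s(x, z) :=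
    ConnectedComponent.eq.mpr hadj.reachable
  have hrepeq : ((Conf G).connectedComponentMk s(x, z)).out
      = ((Conf G).connectedComponentMk s(x, y)).out := by rw [hcomp]
  have hclosed := no_odd_closed hK
    ((wk s(x, y)).append ((Walk.cons hadj (wk s(x, z)).reverse).copy rfl hrepeq))
  rw [Walk.length_append, Walk.length_copy, Walk.length_cons, Walk.length_reverse] at hclosed
  intro hcc
  simp only [decide_eq_decide] at hcc
  rw [Nat.even_iff] at hclosed
  rw [Nat.odd_iff, Nat.odd_iff] at hcc
  omega

end Kal

/-- A graph has a locally complete 2-edge-colouring iff its complement contains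
no kaleidoscope. -/
theorem stmt_11 {V : Type*} (G : SimpleGraph V) :
    HasLC2EC G ↔ ¬ HasKaleidoscope Gᶜ :=
  ⟨Kal.forward, Kal.backward⟩
end

section
/- Let G be a graph and suppose the auxiliary graph G⁺ contains an odd cycle e_0 e_1 … e_{2p} in which all edges e_i share a common end vertex u, with e_i = u v_i. Then v_0 v_1 … v_{2p} v_0 is a closed walk of odd length in the complement of G, and hence the complement of G contains an induced odd cycle. -/
/-!
If `e_i = u v_i` and `e_{i+1} = u v_{i+1}` form an induced path, then `v_i v_{i+1}` is a non-edge
of `G`, so the `v_i` trace an odd closed walk in `Gᶜ`. A shortest odd closed walk in any graph is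
an induced cycle: a repeated vertex splits it into two shorter closed walks, and a chord into two
shorter closed walks whose lengths add up to the original length plus two; in both cases one of the
two pieces is odd.
-/

open SimpleGraph

namespace SimpleGraph

variable {V : Type*} {H : SimpleGraph V}

/-- `y 0, y 1, …, y (n - 1), y 0` is a closed walk of length `n` in `H`; the values of `y` from
`n` on play no role. -/
def IsCyclicWalk (H : SimpleGraph V) (n : ℕ) (y : ℕ → V) : Prop :=
  ∀ i < n, H.Adj (y i) (y ((i + 1) % n))

theorem isCyclicWalk_of_path_of_eq {z : ℕ → V} {d : ℕ}
    (hz : ∀ a < d, H.Adj (z a) (z (a + 1))) (hd : z d = z 0) : H.IsCyclicWalk d z := by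
  intro a ha
  rcases Nat.lt_or_ge (a + 1) d with hlt | hge
  · rw [Nat.mod_eq_of_lt hlt]
    exact hz a ha
  · obtain rfl : a + 1 = d := by omega
    rw [Nat.mod_self, ← hd]
    exact hz a ha

theorem isCyclicWalk_of_path_of_adj {z : ℕ → V} {d : ℕ}
    (hz : ∀ a < d, H.Adj (z a) (z (a + 1))) (hd : H.Adj (z d) (z 0)) :
    H.IsCyclicWalk (d + 1) z := by
  intro a ha
  rcases Nat.lt_or_ge a d with hlt | hge
  · rw [Nat.mod_eq_of_lt (by omega)]
    exact hz a hlt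
  · obtain rfl : a = d := by omega
    rw [Nat.mod_self]
    exact hd

namespace IsCyclicWalk

variable {m : ℕ} {y : ℕ → V}

theorem ne_one (hy : H.IsCyclicWalk m y) : m ≠ 1 := by
  rintro rfl
  exact (hy 0 Nat.one_pos).ne rfl

theorem adj_add_mod (hy : H.IsCyclicWalk m y) (hm : 0 < m) (s a : ℕ) :
    H.Adj (y ((s + a) % m)) (y ((s + (a + 1)) % m)) := by
  simpa only [Nat.mod_add_mod, add_assoc] using hy _ (Nat.mod_lt (s + a) hm)

theorem segment_of_eq (hy : H.IsCyclicWalk m y) (hm : 0 < m) {s d : ℕ}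
    (hd : y ((s + d) % m) = y (s % m)) :
    H.IsCyclicWalk d (fun a => y ((s + a) % m)) :=
  isCyclicWalk_of_path_of_eq (fun a _ => hy.adj_add_mod hm s a) (by simpa using hd)

theorem segment_of_adj (hy : H.IsCyclicWalk m y) (hm : 0 < m) {s d : ℕ}
    (hd : H.Adj (y ((s + d) % m)) (y (s % m))) :
    H.IsCyclicWalk (d + 1) (fun a => y ((s + a) % m)) :=
  isCyclicWalk_of_path_of_adj (fun a _ => hy.adj_add_mod hm s a) (by simpa using hd)

theorem exists_shorter_odd_of_eq (hy : H.IsCyclicWalk m y) (hm : Odd m) {i j : ℕ}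
    (hij : i < j) (hjm : j < m) (heq : y i = y j) :
    ∃ k < m, Odd k ∧ ∃ z, H.IsCyclicWalk k z := by
  have hm0 := hm.pos
  have hi : i % m = i := Nat.mod_eq_of_lt (by omega)
  have hj : j % m = j := Nat.mod_eq_of_lt hjm
  have first : H.IsCyclicWalk (j - i) (fun a => y ((i + a) % m)) :=
    hy.segment_of_eq hm0 (by rw [Nat.add_sub_cancel' hij.le, hi, hj, heq])
  have second : H.IsCyclicWalk (m - (j - i)) (fun a => y ((j + a) % m)) :=
    hy.segment_of_eq hm0
      (by rw [show j + (m - (j - i)) = i + m by omega, Nat.add_mod_right, hi, hj, heq])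
  rcases Nat.even_or_odd (j - i) with heven | hodd
  · exact ⟨_, by omega, Nat.Odd.sub_even (by omega) hm heven, _, second⟩
  · exact ⟨_, by omega, hodd, _, first⟩

theorem exists_shorter_odd_of_chord (hy : H.IsCyclicWalk m y) (hm : Odd m) {i j : ℕ}
    (hij : i + 2 ≤ j) (hjm : j < m) (hji : j + 2 ≤ m + i) (hadj : H.Adj (y i) (y j)) :
    ∃ k < m, Odd k ∧ ∃ z, H.IsCyclicWalk k z := by
  have hm0 := hm.pos
  have hi : i % m = i := Nat.mod_eq_of_lt (by omega)
  have hj : j % m = j := Nat.mod_eq_of_lt hjm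
  have first : H.IsCyclicWalk (j - i + 1) (fun a => y ((i + a) % m)) :=
    hy.segment_of_adj hm0
      (by rw [Nat.add_sub_cancel' (by omega), hi, hj]; exact hadj.symm)
  have second : H.IsCyclicWalk (m - (j - i) + 1) (fun a => y ((j + a) % m)) :=
    hy.segment_of_adj hm0
      (by rw [show j + (m - (j - i)) = i + m by omega, Nat.add_mod_right, hi, hj]; exact hadj)
  rcases Nat.even_or_odd (j - i) with heven | hodd
  · exact ⟨_, by omega, heven.add_one, _, first⟩
  · exact ⟨_, by omega, (Nat.Odd.sub_odd hm hodd).add_one, _, second⟩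

theorem nonempty_embedding (hy : H.IsCyclicWalk m y) (hm : 2 ≤ m)
    (hinj : ∀ i < m, ∀ j < m, y i = y j → i = j)
    (hchord : ∀ i < m, ∀ j < m, H.Adj (y i) (y j) → j = (i + 1) % m ∨ i = (j + 1) % m) :
    Nonempty (cycleGraph m ↪g H) := by
  obtain ⟨n, rfl⟩ := Nat.exists_eq_add_of_le' hm
  have succ_iff (a b : Fin (n + 2)) : b = a + 1 ↔ b.val = (a.val + 1) % (n + 2) := by
    simp [Fin.ext_iff, Fin.val_add]
  refine ⟨⟨⟨fun a => y a, fun a b hab => Fin.ext (hinj _ a.2 _ b.2 hab)⟩, ?_⟩⟩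
  intro a b
  change H.Adj (y a) (y b) ↔ _
  simp only [cycleGraph_adj, sub_eq_iff_eq_add', succ_iff]
  constructor
  · intro hadj
    exact (hchord _ a.2 _ b.2 hadj).symm
  · rintro (h | h)
    · exact (h ▸ hy b b.2).symm
    · exact h ▸ hy a a.2

theorem exists_odd_cycleGraph_embedding (hy : H.IsCyclicWalk m y) (hm : Odd m) :
    ∃ n : ℕ, Odd n ∧ 3 ≤ n ∧ Nonempty (cycleGraph n ↪g H) := by
  induction m using Nat.strong_induction_on generalizing y with
  | _ m ih =>
  by_cases hshorter : ∃ k < m, Odd k ∧ ∃ z, H.IsCyclicWalk k z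
  · obtain ⟨k, hkm, hk, z, hz⟩ := hshorter
    exact ih k hkm hz hk
  have hm3 : 3 ≤ m := by
    obtain ⟨r, rfl⟩ := hm
    have := hy.ne_one
    omega
  refine ⟨m, hm, hm3, hy.nonempty_embedding (by omega) ?_ ?_⟩
  · intro i hi j hj heq
    by_contra hne
    rcases Nat.lt_or_gt_of_ne hne with hlt | hlt
    · exact hshorter (hy.exists_shorter_odd_of_eq hm hlt hj heq)
    · exact hshorter (hy.exists_shorter_odd_of_eq hm hlt hi heq.symm)
  · have chord_of_lt (i j : ℕ) (hij : i < j) (hj : j < m) (hadj : H.Adj (y i) (y j)) :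
        j = (i + 1) % m ∨ i = (j + 1) % m := by
      by_cases hnear : j = i + 1 ∨ (i = 0 ∧ j = m - 1)
      · rcases hnear with rfl | ⟨rfl, rfl⟩
        · exact .inl (Nat.mod_eq_of_lt hj).symm
        · exact .inr (by rw [Nat.sub_add_cancel (by omega), Nat.mod_self])
      · exact absurd (hy.exists_shorter_odd_of_chord hm (by omega) hj (by omega) hadj) hshorter
    intro i hi j hj hadj
    rcases lt_trichotomy i j with hlt | rfl | hlt
    · exact chord_of_lt i j hlt hj hadj
    · exact absurd rfl hadj.ne
    · exact (chord_of_lt j i hlt hi hadj.symm).symm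

end IsCyclicWalk

end SimpleGraph

theorem compl_adj_of_auxAdj {V : Type*} {G : SimpleGraph V} {u v w : V}
    (h : AuxAdj G s(u, v) s(u, w)) : Gᶜ.Adj v w := by
  obtain ⟨u', v', w', hv', hw', hne, hnadj, he, hf⟩ := h
  rw [Sym2.eq_iff] at he hf
  rcases he with ⟨rfl, rfl⟩ | ⟨rfl, rfl⟩ <;> rcases hf with ⟨hu, rfl⟩ | ⟨hu, rfl⟩
  · exact (compl_adj G _ _).2 ⟨hne, hnadj⟩
  · exact absurd (hu ▸ hw') G.irrefl
  · exact absurd (hu ▸ hv') G.irrefl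
  · exact absurd hu hne

/-- If `G⁺` contains an odd closed walk `e_0 e_1 … e_{2p} e_0` whose edges all share
the common endpoint `u`, `e_i = u v_i`, then `v_0 v_1 … v_{2p} v_0` is an odd closed
walk in `Gᶜ`, and hence `Gᶜ` contains an induced odd cycle. -/
theorem stmt_16 {V : Type*} (G : SimpleGraph V) (p : ℕ) (u : V) (v : ℕ → V)
    (h : ∀ i < 2 * p + 1, AuxAdj G s(u, v i) s(u, v ((i + 1) % (2 * p + 1)))) :
    (∀ i < 2 * p + 1, Gᶜ.Adj (v i) (v ((i + 1) % (2 * p + 1)))) ∧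
      ∃ n : ℕ, Odd n ∧ 3 ≤ n ∧ Nonempty (SimpleGraph.cycleGraph n ↪g Gᶜ) := by
  have hwalk : Gᶜ.IsCyclicWalk (2 * p + 1) v := fun i hi => compl_adj_of_auxAdj (h i hi)
  exact ⟨hwalk, hwalk.exists_odd_cycleGraph_embedding (odd_two_mul_add_one p)⟩
end

section
/- A graph G admits a locally complete 2-edge-colouring if and only if its reduced subgraph (obtained by repeatedly deleting one vertex of each pair of true twins until none remain) admits a locally complete 2-edge-colouring. -/
open SimpleGraph

/-- `u` and `v` are true twins in `G`: they have the same closed neighbourhood. -/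
def TrueTwins {V : Type*} (G : SimpleGraph V) (u v : V) : Prop :=
  ∀ w : V, (w = u ∨ G.Adj u w) ↔ (w = v ∨ G.Adj v w)

/-
An induced path `v - u - w` is exactly a triple with `v, w ∈ N[u]` and `w ∉ N[v]` (closed
neighbourhoods, `N[u] = {x | ReflGen G.Adj u x}`), so it survives replacing each vertex by a
true twin. Hence mapping every vertex to its representative in `S` sends induced 2-paths of `G`
to induced 2-paths of `G[S]`, and pulling a locally complete colouring of `G[S]` back along this
map gives one of `G`. The converse is restriction along the embedding `G[S] ↪g G`.
-/

open Relation

section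

variable {V W : Type*} {G : SimpleGraph V} {H : SimpleGraph W}

/-- `v - u - w` is an induced path of length 2 with middle vertex `u`. -/
def SimpleGraph.IsInducedTwoPath (G : SimpleGraph V) (u v w : V) : Prop :=
  G.Adj u v ∧ G.Adj u w ∧ v ≠ w ∧ ¬ G.Adj v w

lemma isLocallyComplete_iff {c : Sym2 V → Bool} :
    IsLocallyComplete G c ↔ ∀ u v w, G.IsInducedTwoPath u v w → c s(u, v) ≠ c s(u, w) :=
  ⟨fun h u v w ⟨huv, huw, hvw, hn⟩ => h u v w huv huw hvw hn,
    fun h u v w huv huw hvw hn => h u v w ⟨huv, huw, hvw, hn⟩⟩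

lemma SimpleGraph.reflGen_adj_comm {u v : V} : ReflGen G.Adj u v ↔ ReflGen G.Adj v u := by
  simp only [reflGen_iff, eq_comm, G.adj_comm]

lemma isInducedTwoPath_iff_reflGen {u v w : V} :
    G.IsInducedTwoPath u v w ↔
      ReflGen G.Adj u v ∧ ReflGen G.Adj u w ∧ ¬ ReflGen G.Adj v w := by
  simp only [SimpleGraph.IsInducedTwoPath, reflGen_iff]
  constructor
  · rintro ⟨huv, huw, hvw, hn⟩
    exact ⟨.inr huv, .inr huw, by rintro (h | h) <;> [exact hvw h.symm; exact hn h]⟩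
  · rintro ⟨huv, huw, hn⟩
    obtain ⟨hwv, hvw⟩ := not_or.1 hn
    rcases huv with rfl | huv
    · exact absurd (huw.resolve_left hwv) hvw
    rcases huw with rfl | huw
    · exact absurd huv.symm hvw
    exact ⟨huv, huw, fun h => hwv h.symm, hvw⟩

lemma TrueTwins.reflGen_adj_iff_left {a a' b : V} (h : TrueTwins G a a') :
    ReflGen G.Adj a b ↔ ReflGen G.Adj a' b := by
  simpa only [reflGen_iff] using h b

lemma TrueTwins.reflGen_adj_iff {a a' b b' : V} (ha : TrueTwins G a a') (hb : TrueTwins G b b') :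
    ReflGen G.Adj a b ↔ ReflGen G.Adj a' b' := by
  rw [ha.reflGen_adj_iff_left, reflGen_adj_comm, hb.reflGen_adj_iff_left, reflGen_adj_comm]

lemma TrueTwins.isInducedTwoPath {u u' v v' w w' : V} (hu : TrueTwins G u u')
    (hv : TrueTwins G v v') (hw : TrueTwins G w w') (h : G.IsInducedTwoPath u v w) :
    G.IsInducedTwoPath u' v' w' := by
  rw [isInducedTwoPath_iff_reflGen] at h ⊢
  rwa [← hu.reflGen_adj_iff hv, ← hu.reflGen_adj_iff hw, ← hv.reflGen_adj_iff hw]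

lemma SimpleGraph.Embedding.isInducedTwoPath_iff (f : G ↪g H) {u v w : V} :
    H.IsInducedTwoPath (f u) (f v) (f w) ↔ G.IsInducedTwoPath u v w := by
  simp only [SimpleGraph.IsInducedTwoPath, f.map_adj_iff, ne_eq, f.injective.eq_iff]

lemma HasLC2EC.of_map_isInducedTwoPath (f : V → W)
    (hf : ∀ u v w, G.IsInducedTwoPath u v w → H.IsInducedTwoPath (f u) (f v) (f w))
    (hH : HasLC2EC H) : HasLC2EC G := by
  obtain ⟨c, hc⟩ := hH
  refine ⟨fun e => c (e.map f), isLocallyComplete_iff.2 fun u v w h => ?_⟩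
  simpa only [Sym2.map_mk] using isLocallyComplete_iff.1 hc _ _ _ (hf u v w h)

lemma HasLC2EC.of_embedding (f : G ↪g H) (hH : HasLC2EC H) : HasLC2EC G :=
  hH.of_map_isInducedTwoPath f fun _ _ _ => f.isInducedTwoPath_iff.2

end

/-- `G` has a locally complete 2-edge-colouring iff its reduced subgraph (the
induced subgraph on a set `S` containing exactly one vertex from each true-twin
class) has one. -/
theorem stmt_19 {V : Type*} (G : SimpleGraph V) (S : Set V)
    (hS : ∀ v : V, ∃! u : V, u ∈ S ∧ TrueTwins G v u) :
    HasLC2EC G ↔ HasLC2EC (G.induce S) := by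
  refine ⟨HasLC2EC.of_embedding (Embedding.induce S), fun hS' => ?_⟩
  choose r hr using fun v => (hS v).exists
  refine hS'.of_map_isInducedTwoPath (fun v => ⟨r v, (hr v).1⟩) fun u v w h => ?_
  rw [← (Embedding.induce S).isInducedTwoPath_iff]
  exact (hr u).2.isInducedTwoPath (hr v).2 (hr w).2 h
end
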